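/- arXiv:2205.02574 — 2 statements merged into one kernel-verified Lean document; each statement's English description precedes it below -/
import Mathlib

section
/- The map val_F restricted to binary words with no factor 11 and not starting with 0 is a bijection onto the natural numbers ℕ (Zeckendorf's theorem). -/
/-- Fibonacci sequence with F 0 = 1, F 1 = 2. -/
def F (n : ℕ) : ℕ := Nat.fib (n + 2)

/-- Fibonacci extended to integer indices ≥ -2, with F_{-2} = 0, F_{-1} = 1. -/
def Fz (m : ℤ) : ℤ := ((m + 2).toNat.fib : ℤ)

/-- Fibonacci value of a word (most significant digit first):
`valF (w_{k-1} ⋯ w_0) = ∑ w_i F_i`. -/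
def valF : List ℕ → ℕ
  | [] => 0
  | a :: t => a * F t.length + valF t

/-- Fibonacci's complement value:
`valFc (w_{k-1} ⋯ w_0) = ∑ w_i F_i − w_{k-1} F_k`. -/
def valFc (w : List ℕ) : ℤ :=
  (valF w : ℤ) - (w.headD 0 : ℤ) * (F w.length : ℤ)

lemma F_pos (n : ℕ) : 0 < F n := Nat.fib_pos.2 (by omega)

lemma F_mono : Monotone F := fun a b h => Nat.fib_mono (by omega)

lemma F_succ (n : ℕ) : F (n + 1) = F n + Nat.fib (n + 1) := by
  simp [F, Nat.fib_add_two]; ring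

lemma F_ge (n : ℕ) : n + 1 ≤ F n := by
  induction n with
  | zero => simp [F]
  | succ n ih =>
    have h1 : 0 < Nat.fib (n + 1) := Nat.fib_pos.2 (by omega)
    rw [F_succ]; omega

lemma not_infix_tail {a : ℕ} {l : List ℕ} (h : ¬ [1,1] <:+: a :: l) : ¬ [1,1] <:+: l :=
  fun h' => h (List.infix_cons_iff.2 (Or.inr h'))

lemma head_ne_one {l : List ℕ} (h : ¬ [1,1] <:+: 1 :: l) : l.head? ≠ some 1 := by
  intro hh
  cases l with
  | nil => simp at hh
  | cons b t =>
    simp at hh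
    exact h (List.infix_cons_iff.2 (Or.inl (by simp [hh, List.cons_prefix_cons])))

lemma valF_zero_cons (t : List ℕ) : valF (0 :: t) = valF t := by simp [valF]

lemma valF_lt : ∀ w : List ℕ, (∀ x ∈ w, x ≤ 1) → ¬ [1,1] <:+: w → valF w < F w.length
  | [] => fun _ _ => by simp [valF, F]
  | [a] => fun hle _ => by
      have := hle a (by simp)
      interval_cases a <;> simp [valF, F] <;> decide
  | a :: b :: t => fun hle hinf => by
      have ha : a ≤ 1 := hle a (by simp)
      interval_cases a
      · rw [valF_zero_cons]
        calc valF (b :: t) < F (b :: t).length :=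
              valF_lt (b :: t) (fun x hx => hle x (by simp [hx])) (not_infix_tail hinf)
          _ ≤ F (0 :: b :: t).length := F_mono (by simp)
      · have hb : b = 0 := by
          have h1 := head_ne_one hinf
          have := hle b (by simp)
          simp at h1; omega
        subst hb
        have ht : valF t < F t.length :=
          valF_lt t (fun x hx => hle x (by simp [hx]))
            (not_infix_tail (not_infix_tail hinf))
        have e1 : valF (1 :: 0 :: t) = F (t.length + 1) + valF t := by
          simp [valF]
        have e2 : F (t.length + 2) = F (t.length + 1) + F t.length := by
          simp [F, Nat.fib_add_two]; ring
        have e3 : (1 :: 0 :: t).length = t.length + 2 := by simp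
        rw [e1, e3, e2]
        omega

lemma valF_one_cons (t : List ℕ) : valF (1 :: t) = F t.length + valF t := by simp [valF]

lemma valF_inj : ∀ w1 w2 : List ℕ, w1.length = w2.length →
    (∀ x ∈ w1, x ≤ 1) → ¬ [1,1] <:+: w1 →
    (∀ x ∈ w2, x ≤ 1) → ¬ [1,1] <:+: w2 →
    valF w1 = valF w2 → w1 = w2 := by
  intro w1
  induction w1 with
  | nil => intro w2 hlen _ _ _ _ _; simpa using (List.length_eq_zero_iff.1 hlen.symm).symm
  | cons a t1 ih =>
    intro w2 hlen h1 h2 h3 h4 hv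
    cases w2 with
    | nil => simp at hlen
    | cons b t2 =>
      simp only [List.length_cons] at hlen
      have hlen' : t1.length = t2.length := by omega
      have ha : a ≤ 1 := h1 a (by simp)
      have hb : b ≤ 1 := h3 b (by simp)
      have l1 : valF t1 < F t1.length := valF_lt t1 (fun x hx => h1 x (by simp [hx])) (not_infix_tail h2)
      have l2 : valF t2 < F t2.length := valF_lt t2 (fun x hx => h3 x (by simp [hx])) (not_infix_tail h4)
      rw [hlen'] at l1
      have tail_eq : valF t1 = valF t2 → t1 = t2 := fun h =>
        ih t2 hlen' (fun x hx => h1 x (by simp [hx])) (not_infix_tail h2)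
          (fun x hx => h3 x (by simp [hx])) (not_infix_tail h4) h
      interval_cases a <;> interval_cases b <;>
        simp only [valF_zero_cons, valF_one_cons, hlen'] at hv ⊢
      · rw [tail_eq hv]
      · omega
      · omega
      · rw [tail_eq (by omega)]

lemma valF_rep_append (j : ℕ) (w : List ℕ) : valF (List.replicate j 0 ++ w) = valF w := by
  induction j with
  | zero => simp
  | succ j ih => rw [List.replicate_succ, List.cons_append, valF_zero_cons, ih]

lemma not_infix_zero_cons {l : List ℕ} (h : ¬ [1,1] <:+: l) : ¬ [1,1] <:+: (0 :: l) := by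
  intro hh
  rcases List.infix_cons_iff.1 hh with hp | hi
  · rw [List.cons_prefix_cons] at hp; omega
  · exact h hi

lemma not_infix_rep_append {w : List ℕ} (j : ℕ) (h : ¬ [1,1] <:+: w) :
    ¬ [1,1] <:+: (List.replicate j 0 ++ w) := by
  induction j with
  | zero => simpa
  | succ j ih => rw [List.replicate_succ, List.cons_append]; exact not_infix_zero_cons ih

lemma not_infix_one_cons {l : List ℕ} (h1 : l.head? ≠ some 1) (h2 : ¬ [1,1] <:+: l) :
    ¬ [1,1] <:+: (1 :: l) := by
  intro hh
  rcases List.infix_cons_iff.1 hh with hp | hi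
  · rw [List.cons_prefix_cons] at hp
    obtain ⟨-, hp⟩ := hp
    cases l with
    | nil => simp at hp
    | cons b t => rw [List.cons_prefix_cons] at hp; exact h1 (by simp [hp.1])
  · exact h2 hi

lemma exists_F_interval : ∀ n : ℕ, 1 ≤ n → ∃ k, F k ≤ n ∧ n < F (k + 1) := by
  intro n hn
  induction n with
  | zero => omega
  | succ n ih =>
    rcases Nat.eq_or_lt_of_le hn with h | h
    · exact ⟨0, by simp [← h, F]; decide⟩
    · obtain ⟨k, hk1, hk2⟩ := ih (by omega)
      by_cases hc : n + 1 < F (k + 1)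
      · exact ⟨k, by omega, hc⟩
      · have he : n + 1 = F (k + 1) := by omega
        refine ⟨k + 1, by omega, ?_⟩
        have : F (k + 1) < F (k + 2) :=
          Nat.fib_lt_fib_succ (n := k + 3) (by omega)
        show n + 1 < F (k + 2)
        omega

lemma surjF : ∀ n : ℕ, ∃ w : List ℕ,
    (∀ x ∈ w, x ≤ 1) ∧ ¬ [1,1] <:+: w ∧ w.head? ≠ some 0 ∧ valF w = n := by
  intro n
  induction n using Nat.strong_induction_on with
  | _ n ih =>
    rcases Nat.eq_zero_or_pos n with h0 | h0
    · exact ⟨[], by simp [h0, valF, List.infix_iff_prefix_suffix]⟩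
    · obtain ⟨k, hk1, hk2⟩ := exists_F_interval n h0
      set m := n - F k with hm
      have hmn : m < n := by have := F_pos k; omega
      have hmlt : m < Nat.fib (k + 1) := by
        have : F (k + 1) = F k + Nat.fib (k + 1) := by
          simp [F, Nat.fib_add_two]; ring
        omega
      obtain ⟨w', hw1, hw2, hw3, hw4⟩ := ih m hmn
      cases w' with
      | nil =>
        refine ⟨1 :: List.replicate k 0, ?_, ?_, by simp, ?_⟩
        · intro x hx; simp at hx; rcases hx with h | h <;> omega
        · have hrep := not_infix_rep_append (w := []) k (by simp)
          rw [List.append_nil] at hrep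
          refine not_infix_one_cons ?_ hrep
          cases k with
          | zero => simp
          | succ k => simp [List.replicate_succ]
        · simp only [valF_one_cons, List.length_replicate]
          have : valF (List.replicate k 0) = 0 := by
            simpa [valF] using valF_rep_append k []
          simp [valF] at hw4
          omega
      | cons b t' =>
        have hb1 : b = 1 := by
          have := hw1 b (by simp)
          simp at hw3; omega
        subst hb1
        have hlow : Nat.fib (t'.length + 2) ≤ m := by
          rw [← hw4, valF_one_cons]; simp [F]
        have hlen : t'.length + 2 < k + 1 := by
          by_contra hc
          have := Nat.fib_mono (show k + 1 ≤ t'.length + 2 by omega)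
          omega
        obtain ⟨j, hj⟩ : ∃ j, k = (j + 1) + (t'.length + 1) := ⟨k - t'.length - 2, by omega⟩
        refine ⟨1 :: (List.replicate (j + 1) 0 ++ 1 :: t'), ?_, ?_, by simp, ?_⟩
        · intro x hx
          simp at hx
          rcases hx with h | h | h | h <;> first | omega | exact hw1 x (by simp [h])
        · refine not_infix_one_cons ?_ (not_infix_rep_append (j + 1) hw2)
          simp [List.replicate_succ]
        · rw [valF_one_cons, valF_rep_append, hw4]
          simp only [List.length_append, List.length_replicate, List.length_cons]
          have : j + 1 + (t'.length + 1) = k := hj.symm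
          rw [this]
          omega

theorem zeckendorf_bijection :
    Set.BijOn valF
      {w : List ℕ | (∀ x ∈ w, x ≤ 1) ∧ ¬ [1, 1] <:+: w ∧ w.head? ≠ some 0}
      Set.univ := by
  refine ⟨fun _ _ => trivial, ?_, ?_⟩
  · rintro w1 ⟨h1, h2, h3⟩ w2 ⟨h4, h5, h6⟩ hv
    cases w1 with
    | nil =>
      cases w2 with
      | nil => rfl
      | cons b t2 =>
        exfalso
        have hb : b = 1 := by have := h4 b (by simp); simp at h6; omega
        subst hb
        have := F_pos t2.length
        simp [valF, valF_one_cons] at hv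
        omega
    | cons a t1 =>
      have ha : a = 1 := by have := h1 a (by simp); simp at h3; omega
      subst ha
      cases w2 with
      | nil =>
        exfalso
        have := F_pos t1.length
        simp [valF, valF_one_cons] at hv
        omega
      | cons b t2 =>
        have hb : b = 1 := by have := h4 b (by simp); simp at h6; omega
        subst hb
        have l1 : valF t1 < F t1.length := valF_lt t1 (fun x hx => h1 x (by simp [hx])) (not_infix_tail h2)
        have l2 : valF t2 < F t2.length := valF_lt t2 (fun x hx => h4 x (by simp [hx])) (not_infix_tail h5)
        have hlen : t1.length = t2.length := by
          rcases lt_trichotomy t1.length t2.length with h | h | h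
          · exfalso
            have := F_mono (show t1.length + 1 ≤ t2.length by omega)
            rw [valF_one_cons, valF_one_cons] at hv
            have b1 : valF (1 :: t1) < F (t1.length + 1) :=
              valF_lt (1 :: t1) h1 h2
            rw [valF_one_cons] at b1
            omega
          · exact h
          · exfalso
            have := F_mono (show t2.length + 1 ≤ t1.length by omega)
            rw [valF_one_cons, valF_one_cons] at hv
            have b2 : valF (1 :: t2) < F (t2.length + 1) :=
              valF_lt (1 :: t2) h4 h5
            rw [valF_one_cons] at b2
            omega
        exact valF_inj (1 :: t1) (1 :: t2) (by simp [hlen]) h1 h2 h4 h5 hv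
  · intro n _
    obtain ⟨w, h1, h2, h3, h4⟩ := surjF n
    exact ⟨w, ⟨h1, h2, h3⟩, h4⟩
end

section
/- The map val_Fc is a bijection from D = Σ(ΣΣ)* \ (Σ*11Σ* ∪ 000Σ* ∪ 101Σ*) onto ℤ; i.e., every integer (positive, negative, or zero) has a unique Fibonacci's complement representation among odd-length binary words with no factor 11, not starting with 000 or 101. -/
/-- The domain D of the Fibonacci's complement numeration system. -/
def inD (w : List ℕ) : Prop :=
  (∀ x ∈ w, x ≤ 1) ∧ Odd w.length ∧ ¬ [1, 1] <:+: w ∧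
    ¬ [0, 0, 0] <+: w ∧ ¬ [1, 0, 1] <+: w

/-!
Binary words without factor `11` of length `k` are the Zeckendorf representations of
`0, …, F k - 1`, so `valF` is injective on words of a fixed length; so is `valFc`, since a
leading `1` makes the value negative and a leading `0` keeps it nonnegative. Every integer is
the `valFc` of such a word of odd length. The rewriting `a u ↦ a 0 a u` (that is, `0u ↦ 000u`
and `1u ↦ 101u`) preserves `valFc` and the absence of `11`, and `D` consists of the odd-length
words outside its image. Undoing it gives surjectivity; applying it to the shorter of two words
of `D` with equal value until the lengths agree gives injectivity.
-/

theorem F_add_two (n : ℕ) : F (n + 2) = F (n + 1) + F n :=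
  (Nat.fib_add_two (n := n + 2)).trans (Nat.add_comm _ _)

theorem F_strictMono : StrictMono F :=
  Nat.fib_add_two_strictMono

theorem le_F (n : ℕ) : n ≤ F n :=
  F_strictMono.id_le n

def IsFibWord (w : List ℕ) : Prop :=
  (∀ x ∈ w, x ≤ 1) ∧ ¬ [1, 1] <:+: w

theorem isFibWord_nil : IsFibWord [] := by
  simp [IsFibWord]

theorem isFibWord_cons {a : ℕ} {t : List ℕ} :
    IsFibWord (a :: t) ↔ a ≤ 1 ∧ (a = 1 → t.headD 0 ≠ 1) ∧ IsFibWord t := by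
  cases t with
  | nil => simp [IsFibWord, List.infix_cons_iff]
  | cons b s =>
    simp only [IsFibWord, List.mem_cons, forall_eq_or_imp, List.infix_cons_iff,
      List.cons_prefix_cons, List.nil_prefix, and_true, not_or, not_and, List.headD_cons]
    grind

theorem IsFibWord.head_le {a : ℕ} {t : List ℕ} (h : IsFibWord (a :: t)) : a ≤ 1 :=
  (isFibWord_cons.1 h).1

theorem IsFibWord.of_cons {a : ℕ} {t : List ℕ} (h : IsFibWord (a :: t)) : IsFibWord t :=
  (isFibWord_cons.1 h).2.2

theorem valF_lt_F_length : ∀ {w : List ℕ}, IsFibWord w → valF w < F w.length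
  | [], _ => Nat.one_pos
  | [1], _ => by decide
  | 0 :: t, h => by
    have := valF_lt_F_length h.of_cons
    have := F_strictMono (Nat.lt_add_one t.length)
    simp only [valF, List.length_cons]
    omega
  | 1 :: 0 :: s, h => by
    have := valF_lt_F_length h.of_cons.of_cons
    simp only [valF, List.length_cons, F_add_two]
    omega
  | 1 :: (b + 1) :: s, h => by
    have := (isFibWord_cons.1 h).2.1 rfl
    have := h.of_cons.head_le
    simp_all
  | (a + 2) :: t, h => absurd h.head_le (by omega)

theorem valF_injOn_length : ∀ {w w' : List ℕ}, IsFibWord w → IsFibWord w' →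
    w.length = w'.length → valF w = valF w' → w = w'
  | [], [], _, _, _, _ => rfl
  | a :: t, b :: s, hw, hw', hl', hv => by
    have hl : t.length = s.length := Nat.succ_injective hl'
    have ht := valF_lt_F_length hw.of_cons
    have hs := valF_lt_F_length hw'.of_cons
    have ha := hw.head_le
    have hb := hw'.head_le
    simp only [valF] at hv
    rw [hl] at hv ht
    obtain ⟨rfl, hts⟩ : a = b ∧ valF t = valF s := by
      interval_cases a <;> interval_cases b <;> omega
    rw [valF_injOn_length hw.of_cons hw'.of_cons hl hts]

theorem valF_eq_of_valFc_eq : ∀ {w w' : List ℕ}, IsFibWord w → IsFibWord w' →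
    w.length = w'.length → valFc w = valFc w' → valF w = valF w'
  | [], [], _, _, _, _ => rfl
  | a :: t, b :: s, hw, hw', hl, hv => by
    have h := valF_lt_F_length hw
    have h' := valF_lt_F_length hw'
    have ha := hw.head_le
    have hb := hw'.head_le
    simp only [valFc, List.headD_cons, List.length_cons] at hv h h' hl
    rw [hl] at hv h
    interval_cases a <;> interval_cases b <;> omega

theorem valFc_injOn_length {w w' : List ℕ} (hw : IsFibWord w) (hw' : IsFibWord w')
    (hl : w.length = w'.length) (h : valFc w = valFc w') : w = w' :=
  valF_injOn_length hw hw' hl (valF_eq_of_valFc_eq hw hw' hl h)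

def lengthen (w : List ℕ) : List ℕ :=
  w.headD 0 :: 0 :: w

theorem length_lengthen (w : List ℕ) : (lengthen w).length = w.length + 2 :=
  rfl

theorem valFc_lengthen (w : List ℕ) : valFc (lengthen w) = valFc w := by
  cases w with
  | nil => rfl
  | cons a t =>
    simp only [lengthen, valFc, valF, List.headD_cons, List.length_cons, F_add_two]
    push_cast
    ring

theorem isFibWord_lengthen {w : List ℕ} : IsFibWord (lengthen w) ↔ IsFibWord w := by
  cases w with
  | nil => simp [lengthen, isFibWord_cons, isFibWord_nil]
  | cons a t =>
    refine ⟨fun h => h.of_cons.of_cons, fun h => ?_⟩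
    exact isFibWord_cons.2 ⟨h.head_le, by simp, isFibWord_cons.2 ⟨zero_le_one, by simp, h⟩⟩

theorem length_iterate_lengthen (w : List ℕ) (j : ℕ) :
    (lengthen^[j] w).length = w.length + 2 * j := by
  induction j with
  | zero => rfl
  | succ j ih => rw [Function.iterate_succ_apply', length_lengthen, ih]; ring

theorem valFc_iterate_lengthen (w : List ℕ) (j : ℕ) : valFc (lengthen^[j] w) = valFc w :=
  Function.Iterate.rec (fun v => valFc v = valFc w) rfl
    (fun v hv => (valFc_lengthen v).trans hv) j

theorem IsFibWord.iterate_lengthen {w : List ℕ} (hw : IsFibWord w) (j : ℕ) :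
    IsFibWord (lengthen^[j] w) :=
  Function.Iterate.rec IsFibWord hw (fun _ hv => isFibWord_lengthen.2 hv) j

theorem inD_iff {w : List ℕ} :
    inD w ↔ IsFibWord w ∧ Odd w.length ∧ ∀ v, w ≠ lengthen v := by
  unfold inD IsFibWord
  constructor
  · rintro ⟨hbin, hodd, h11, h000, h101⟩
    refine ⟨⟨hbin, h11⟩, hodd, ?_⟩
    rintro (_ | ⟨a, t⟩) rfl
    · simp [lengthen, Nat.odd_iff] at hodd
    · have : a ≤ 1 := hbin a (by simp [lengthen])
      interval_cases a
      · exact h000 (by simp [lengthen])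
      · exact h101 (by simp [lengthen])
  · rintro ⟨⟨hbin, h11⟩, hodd, hv⟩
    refine ⟨hbin, hodd, h11, ?_, ?_⟩
    · rintro ⟨t, rfl⟩
      exact hv (0 :: t) rfl
    · rintro ⟨t, rfl⟩
      exact hv (1 :: t) rfl

theorem exists_isFibWord_valF_eq : ∀ {k n : ℕ}, n < F k →
    ∃ w, IsFibWord w ∧ w.length = k ∧ valF w = n
  | 0, n, h => ⟨[], isFibWord_nil, rfl, (Nat.lt_one_iff.1 h).symm⟩
  | 1, n, h => ⟨[n], isFibWord_cons.2 ⟨Nat.lt_succ_iff.1 h, by simp, isFibWord_nil⟩, rfl,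
      by simp [valF, F]⟩
  | k + 2, n, h => by
    rw [F_add_two] at h
    by_cases hn : n < F (k + 1)
    · obtain ⟨u, hu, hlen, rfl⟩ := exists_isFibWord_valF_eq hn
      exact ⟨0 :: u, isFibWord_cons.2 ⟨by omega, by simp, hu⟩, by simp [hlen], by simp [valF]⟩
    · obtain ⟨u, hu, hlen, hv⟩ := exists_isFibWord_valF_eq (k := k) (n := n - F (k + 1)) (by omega)
      refine ⟨1 :: 0 :: u, isFibWord_cons.2 ⟨le_rfl, by simp, isFibWord_cons.2
        ⟨zero_le_one, by simp, hu⟩⟩, by simp [hlen], ?_⟩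
      simp only [valF, List.length_cons, hlen, hv]
      omega

theorem valFc_zero_cons (u : List ℕ) : valFc (0 :: u) = valF u := by
  simp [valFc, valF]

theorem valFc_one_zero_cons (r : List ℕ) : valFc (1 :: 0 :: r) = valF r - F r.length := by
  simp only [valFc, valF, List.headD_cons, List.length_cons, F_add_two]
  push_cast
  ring

theorem exists_odd_isFibWord_valFc_eq (n : ℤ) :
    ∃ w, IsFibWord w ∧ Odd w.length ∧ valFc w = n := by
  rcases n with m | m
  · obtain ⟨u, hu, hlen, hv⟩ := exists_isFibWord_valF_eq (k := 2 * m + 2) (n := m)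
      (by have := le_F (2 * m + 2); omega)
    refine ⟨0 :: u, isFibWord_cons.2 ⟨zero_le_one, by simp, hu⟩, ?_, by simp [valFc_zero_cons, hv]⟩
    exact ⟨m + 1, by rw [List.length_cons, hlen]; ring⟩
  · have hm := le_F (2 * m + 1)
    obtain ⟨r, hr, hlen, hv⟩ := exists_isFibWord_valF_eq (k := 2 * m + 1)
      (n := F (2 * m + 1) - (m + 1)) (by omega)
    refine ⟨1 :: 0 :: r, isFibWord_cons.2 ⟨le_rfl, by simp, isFibWord_cons.2
        ⟨zero_le_one, by simp, hr⟩⟩, ⟨m + 1, by rw [List.length_cons, List.length_cons, hlen]; ring⟩, ?_⟩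
    rw [valFc_one_zero_cons, hv, hlen, Int.negSucc_eq]
    omega

theorem exists_inD_valFc_eq {w : List ℕ} (hw : IsFibWord w) (hodd : Odd w.length) :
    ∃ w', inD w' ∧ valFc w' = valFc w := by
  induction hn : w.length using Nat.strong_induction_on generalizing w with
  | _ n ih =>
    by_cases h : ∃ v, w = lengthen v
    · obtain ⟨v, rfl⟩ := h
      rw [valFc_lengthen]
      rw [length_lengthen] at hn hodd
      exact ih v.length (by omega) (isFibWord_lengthen.1 hw)
        (by simpa [Nat.odd_add] using hodd) rfl
    · exact ⟨w, inD_iff.2 ⟨hw, hodd, fun v hv => h ⟨v, hv⟩⟩, rfl⟩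

theorem eq_of_inD_of_length_le {w w' : List ℕ} (hw : inD w) (hw' : inD w')
    (hl : w.length ≤ w'.length) (h : valFc w = valFc w') : w = w' := by
  obtain ⟨hfib, ⟨a, ha⟩, -⟩ := inD_iff.1 hw
  obtain ⟨hfib', ⟨b, hb⟩, hmin'⟩ := inD_iff.1 hw'
  obtain ⟨j, hj⟩ : ∃ j, w'.length = w.length + 2 * j := ⟨b - a, by omega⟩
  have hpad : lengthen^[j] w = w' :=
    valFc_injOn_length (hfib.iterate_lengthen j) hfib'
      (by rw [length_iterate_lengthen, hj]) (by rw [valFc_iterate_lengthen, h])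
  cases j with
  | zero => exact hpad
  | succ i => exact absurd (hpad.symm.trans (Function.iterate_succ_apply' _ _ _)) (hmin' _)

theorem valFc_injOn_inD : Set.InjOn valFc {w | inD w} := by
  intro w hw w' hw' h
  rcases le_total w.length w'.length with hl | hl
  · exact eq_of_inD_of_length_le hw hw' hl h
  · exact (eq_of_inD_of_length_le hw' hw hl h.symm).symm

theorem valFc_bijection : Set.BijOn valFc {w : List ℕ | inD w} Set.univ := by
  refine ⟨Set.mapsTo_univ _ _, valFc_injOn_inD, fun n _ => ?_⟩
  obtain ⟨w, hw, hodd, rfl⟩ := exists_odd_isFibWord_valFc_eq n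
  exact exists_inD_valFc_eq hw hodd
end
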